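/- Let H be a finite group and A ≤ H an abelian subgroup. Then the number of conjugacy classes of H satisfies k(H) ≥ |A| / [H : A]. -/

import Mathlib

/-!
Counting commuting pairs: `k(G) · |G|` is the number of commuting pairs of `G`, and the commuting
pairs of a subgroup `K` are among those of `G`. Hence `k(K) · |K| ≤ k(G) · |K| · [G : K]`, i.e.
`k(K) ≤ [G : K] · k(G)`; for abelian `K` every conjugacy class is a singleton, so `k(K) = |K|`.
-/

theorem ConjClasses.mk_injective_of_isMulCommutative (G : Type*) [Group G] [IsMulCommutative G] :
    Function.Injective (@ConjClasses.mk G _) := by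
  intro a b hab
  obtain ⟨c, rfl⟩ := isConj_iff.mp (ConjClasses.mk_eq_mk_iff_isConj.mp hab)
  rw [mul_comm' c a, mul_inv_cancel_right]

theorem card_conjClasses_of_isMulCommutative (G : Type*) [Group G] [IsMulCommutative G] :
    Nat.card (ConjClasses G) = Nat.card G :=
  (Nat.card_congr <| Equiv.ofBijective ConjClasses.mk
    ⟨ConjClasses.mk_injective_of_isMulCommutative G, ConjClasses.mk_surjective⟩).symm

namespace Subgroup

variable {G : Type*} [Group G] [Finite G] (K : Subgroup G)

theorem card_commute_le :
    Nat.card { p : K × K // Commute p.1 p.2 } ≤ Nat.card { p : G × G // Commute p.1 p.2 } :=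
  Nat.card_le_card_of_injective (fun p ↦ ⟨⟨p.1.1, p.1.2⟩, Subtype.ext_iff.mp p.2⟩)
    fun p q h ↦ by simpa only [Subtype.ext_iff, Prod.ext_iff] using h

theorem card_conjClasses_le_index_mul :
    Nat.card (ConjClasses K) ≤ K.index * Nat.card (ConjClasses G) := by
  refine Nat.le_of_mul_le_mul_right ?_ (Nat.card_pos (α := K))
  calc Nat.card (ConjClasses K) * Nat.card K
      = Nat.card { p : K × K // Commute p.1 p.2 } := (card_comm_eq_card_conjClasses_mul_card K).symm
    _ ≤ Nat.card { p : G × G // Commute p.1 p.2 } := K.card_commute_le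
    _ = Nat.card (ConjClasses G) * (Nat.card K * K.index) := by
      rw [card_comm_eq_card_conjClasses_mul_card, K.card_mul_index]
    _ = K.index * Nat.card (ConjClasses G) * Nat.card K := by ring

end Subgroup

theorem stmt_7 (H : Type*) [Group H] [Finite H] (A : Subgroup H) (hA : IsMulCommutative A) :
    (Nat.card (ConjClasses H) : ℚ) ≥ (Nat.card A : ℚ) / (A.index : ℚ) := by
  have hcard : Nat.card A ≤ A.index * Nat.card (ConjClasses H) :=
    card_conjClasses_of_isMulCommutative A ▸ A.card_conjClasses_le_index_mul
  have hindex : (0 : ℚ) < A.index := Nat.cast_pos.mpr (Nat.pos_of_ne_zero A.index_ne_zero_of_finite)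
  rw [ge_iff_le, div_le_iff₀ hindex, mul_comm]
  exact_mod_cast hcard
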